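/- Every 2-coloring of the edges of K_{n,k} contains a monochromatic induced copy of K_{a,b} whenever n ≥ a·2^{2b} and k ≥ 2b; here 'induced' is automatic since any subgraph of a complete bipartite graph on chosen left and right vertex subsets is complete bipartite. -/

import Mathlib

/-!
Fix `2b` right vertices. By pigeonhole, some colour pattern on them is shared by `a` of the
`n ≥ a · 2^(2b)` left vertices, and by pigeonhole again some colour occurs `b` times in that
pattern; those `a` left and `b` right vertices span a monochromatic `K_{a,b}`.
-/

open Finset

theorem Fintype.exists_card_eq_forall_eq_of_mul_le_card {α β : Type*} [Fintype α] [Fintype β]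
    [Nonempty β] [DecidableEq β] (f : α → β) {a : ℕ} (h : Fintype.card β * a ≤ Fintype.card α) :
    ∃ (y : β) (A : Finset α), #A = a ∧ ∀ x ∈ A, f x = y := by
  obtain ⟨y, hy⟩ := Fintype.exists_le_card_fiber_of_mul_le_card f h
  obtain ⟨A, hA, rfl⟩ := Finset.exists_subset_card_eq hy
  exact ⟨y, A, rfl, fun x hx => (mem_filter.mp (hA hx)).2⟩

theorem exists_monochromatic_rectangle {α β γ : Type*} [Fintype α] [Fintype β] [Fintype γ]
    [Nonempty γ] [DecidableEq β] [DecidableEq γ] (col : α → β → γ) {a b : ℕ}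
    (hα : a * Fintype.card γ ^ Fintype.card β ≤ Fintype.card α)
    (hβ : Fintype.card γ * b ≤ Fintype.card β) :
    ∃ (A : Finset α) (B : Finset β) (c : γ), #A = a ∧ #B = b ∧ ∀ x ∈ A, ∀ y ∈ B, col x y = c := by
  obtain ⟨p, A, hA, hAp⟩ := Fintype.exists_card_eq_forall_eq_of_mul_le_card col
    (by rwa [Fintype.card_fun, mul_comm])
  obtain ⟨c, B, hB, hBc⟩ := Fintype.exists_card_eq_forall_eq_of_mul_le_card p hβ
  exact ⟨A, B, c, hA, hB, fun x hx y hy => by rw [hAp x hx, hBc y hy]⟩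

theorem stmt_17_general (a b n k : ℕ)
    (hn : n ≥ a * 2 ^ (2 * b)) (hk : k ≥ 2 * b)
    (COL : Fin n → Fin k → Fin 2) :
    ∃ (A : Finset (Fin n)) (B : Finset (Fin k)) (c : Fin 2),
      A.card = a ∧ B.card = b ∧ ∀ x ∈ A, ∀ y ∈ B, COL x y = c := by
  obtain ⟨K, -, hK⟩ := exists_subset_card_eq (s := (univ : Finset (Fin k))) (by simpa using hk)
  obtain ⟨A, B, c, hA, hB, hcol⟩ :=
    exists_monochromatic_rectangle (fun x (y : K) => COL x y) (a := a) (b := b)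
      (by simpa [hK] using hn) (by simp [hK])
  refine ⟨A, B.map (Function.Embedding.subtype _), c, hA, by rw [card_map, hB], ?_⟩
  intro x hx y hy
  obtain ⟨y', hy', rfl⟩ := mem_map.mp hy
  exact hcol x hx y' hy'

/-- Every 2-coloring of `K_{n,k}` with `n ≥ a·2^(2b)` and `k ≥ 2b` contains a
monochromatic (automatically induced) copy of `K_{a,b}`. -/
theorem stmt_17 (a b n k : ℕ) (ha : 0 < a) (hb : 0 < b)
    (hn : n ≥ a * 2 ^ (2 * b)) (hk : k ≥ 2 * b)
    (COL : Fin n → Fin k → Fin 2) :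
    ∃ (A : Finset (Fin n)) (B : Finset (Fin k)) (c : Fin 2),
      A.card = a ∧ B.card = b ∧ ∀ x ∈ A, ∀ y ∈ B, COL x y = c :=
  stmt_17_general a b n k hn hk COL
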